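/- arXiv:1907.05149 — 5 statements merged into one kernel-verified Lean document; each statement's English description precedes it below -/
import Mathlib

section
/- Let f : [a,b] → ℝ be continuous and suppose that limsup_{ε→0⁺} sup_{λ∈(a,b)} (f(λ+ε) + f(λ-ε) - 2f(λ))/ε² ≤ 0 (where the supremum is over those λ for which λ±ε ∈ [a,b]). Then f is concave on [a,b]. -/
open Set Filter Topology

/-!
For `η > 0` the function `f x - η x²` has strictly negative symmetric second differences at all
small scales, because the second difference of `η x²` at scale `ε` is `2ηε²` while that of `f`
is eventually at most `ηε²`. Such a function lies above each of its chords: the difference with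
the chord, if negative somewhere, would attain its minimum at an interior point `l`, and a
negative second difference at `l` contradicts minimality. Letting `η → 0` gives concavity of `f`.
-/

theorem min_le_of_frequently_second_diff_neg {φ : ℝ → ℝ} {x y : ℝ} (hxy : x ≤ y)
    (hφ : ContinuousOn φ (Icc x y))
    (h : ∀ l ∈ Ioo x y, ∃ᶠ ε in 𝓝[>] 0, φ (l + ε) + φ (l - ε) < 2 * φ l) :
    ∀ z ∈ Icc x y, min (φ x) (φ y) ≤ φ z := by
  obtain ⟨l, hl, hmin⟩ := isCompact_Icc.exists_isMinOn (nonempty_Icc.2 hxy) hφ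
  suffices l = x ∨ l = y by
    intro z hz
    rcases this with rfl | rfl
    · exact (min_le_left _ _).trans (hmin hz)
    · exact (min_le_right _ _).trans (hmin hz)
  by_contra! hne
  have hl' : l ∈ Ioo x y := ⟨hl.1.lt_of_ne hne.1.symm, hl.2.lt_of_ne hne.2⟩
  have hnear : ∀ᶠ ε in 𝓝[>] 0, l + ε ∈ Icc x y ∧ l - ε ∈ Icc x y := by
    filter_upwards [Ioo_mem_nhdsGT (lt_min (sub_pos.2 hl'.1) (sub_pos.2 hl'.2))] with ε hε
    have hεx := hε.2.trans_le (min_le_left _ _)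
    have hεy := hε.2.trans_le (min_le_right _ _)
    exact ⟨⟨by linarith [hε.1], by linarith⟩, ⟨by linarith, by linarith [hε.1]⟩⟩
  obtain ⟨ε, hlt, hplus, hminus⟩ := ((h l hl').and_eventually hnear).exists
  linarith [isMinOn_iff.1 hmin _ hplus, isMinOn_iff.1 hmin _ hminus]

theorem concaveOn_Icc_of_frequently_second_diff_neg {g : ℝ → ℝ} {a b : ℝ}
    (hg : ContinuousOn g (Icc a b))
    (h : ∀ l ∈ Ioo a b, ∃ᶠ ε in 𝓝[>] 0, g (l + ε) + g (l - ε) < 2 * g l) :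
    ConcaveOn ℝ (Icc a b) g := by
  refine LinearOrder.concaveOn_of_lt (convex_Icc a b) fun x hx y hy hxy s t hs ht hst => ?_
  set φ : ℝ → ℝ := fun w => g w - (g x + slope g x y * (w - x))
  have hφ : ContinuousOn φ (Icc x y) := (hg.mono (Icc_subset_Icc hx.1 hy.2)).sub (by fun_prop)
  have hφ_second_diff : ∀ l ∈ Ioo x y, ∃ᶠ ε in 𝓝[>] 0, φ (l + ε) + φ (l - ε) < 2 * φ l :=
    fun l hl => (h l ⟨hx.1.trans_lt hl.1, hl.2.trans_le hy.2⟩).mono fun ε hε => by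
      simp only [φ]
      linarith
  have hz : s • x + t • y ∈ Icc x y :=
    convex_Icc x y (left_mem_Icc.2 hxy.le) (right_mem_Icc.2 hxy.le) hs.le ht.le hst
  have hchord := min_le_of_frequently_second_diff_neg hxy.le hφ hφ_second_diff _ hz
  have hslope : (y - x) * slope g x y = g y - g x := sub_smul_slope g x y
  have hφx : φ x = 0 := by simp [φ]
  have hφy : φ y = 0 := by
    simp only [φ]
    linear_combination -hslope
  rw [hφx, hφy, min_self] at hchord
  simp only [φ, smul_eq_mul] at hchord ⊢
  linear_combination hchord - t * hslope - (slope g x y * x - g x) * hst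

theorem concaveOn_of_forall_pos_concaveOn_sub_mul {E : Type*} [AddCommGroup E] [Module ℝ E]
    {s : Set E} {f q : E → ℝ} (h : ∀ η > 0, ConcaveOn ℝ s fun x => f x - η * q x) :
    ConcaveOn ℝ s f := by
  refine ⟨(h 1 one_pos).1, fun x hx y hy a b ha hb hab => ?_⟩
  set z := a • x + b • y
  have hlim : Tendsto (fun η => f z + η * (a * q x + b * q y - q z)) (𝓝[>] 0) (𝓝 (f z)) :=
    tendsto_nhdsWithin_of_tendsto_nhds <|
      (continuous_const.add (continuous_id.mul continuous_const)).tendsto' _ _ (by simp)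
  refine ge_of_tendsto hlim (eventually_nhdsWithin_of_forall fun η hη => ?_)
  have hη_concave := (h η hη).2 hx hy ha hb hab
  simp only [smul_eq_mul] at hη_concave ⊢
  linear_combination hη_concave

theorem concave_of_symmetric_second_difference_general
    (a b : ℝ) (f : ℝ → ℝ)
    (hcont : ContinuousOn f (Icc a b))
    (hlimsup : ∀ c : ℝ, 0 < c → ∃ ε₀ : ℝ, 0 < ε₀ ∧
      ∀ ε : ℝ, 0 < ε → ε < ε₀ →
        ∀ lam : ℝ, lam ∈ Ioo a b → a ≤ lam - ε → lam + ε ≤ b →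
          (f (lam + ε) + f (lam - ε) - 2 * f lam) / ε ^ 2 ≤ c) :
    ConcaveOn ℝ (Icc a b) f := by
  refine concaveOn_of_forall_pos_concaveOn_sub_mul (q := fun x => x ^ 2) fun η hη => ?_
  refine concaveOn_Icc_of_frequently_second_diff_neg (hcont.sub (by fun_prop)) fun l hl => ?_
  obtain ⟨ε₀, hε₀, hq⟩ := hlimsup η hη
  refine Eventually.frequently ?_
  filter_upwards [Ioo_mem_nhdsGT (lt_min hε₀ (lt_min (sub_pos.2 hl.1) (sub_pos.2 hl.2)))]
    with ε ⟨hε, hεm⟩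
  simp only [lt_min_iff] at hεm
  have hbound := (div_le_iff₀ (by positivity)).1
    (hq ε hε hεm.1 l hl (by linarith) (by linarith))
  have hpos : 0 < η * ε ^ 2 := by positivity
  linear_combination hbound + hpos

/-- If `f` is continuous on `[a,b]` and the second-order
symmetric difference quotients satisfy
`limsup_{ε→0⁺} sup_{λ∈(a,b)} (f(λ+ε)+f(λ-ε)-2f(λ))/ε² ≤ 0`
(where the sup is over those `λ` with `λ±ε ∈ [a,b]`), then `f` is concave
on `[a,b]`. -/
theorem concave_of_symmetric_second_difference
    (a b : ℝ) (hab : a < b) (f : ℝ → ℝ)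
    (hcont : ContinuousOn f (Icc a b))
    (hlimsup : ∀ c : ℝ, 0 < c → ∃ ε₀ : ℝ, 0 < ε₀ ∧
      ∀ ε : ℝ, 0 < ε → ε < ε₀ →
        ∀ lam : ℝ, lam ∈ Ioo a b → a ≤ lam - ε → lam + ε ≤ b →
          (f (lam + ε) + f (lam - ε) - 2 * f lam) / ε ^ 2 ≤ c) :
    ConcaveOn ℝ (Icc a b) f :=
  concave_of_symmetric_second_difference_general a b f hcont hlimsup
end

section
/- Let H be a real inner product space, L : H → H a symmetric linear operator, and φ ∈ H with ⟨φ,φ⟩ = λ > 0. Suppose ⟨Lu, u⟩ ≥ 0 for all u ⊥ φ, and ⟨Lφ, φ⟩ < 0. Then every h ∈ ker L satisfies ⟨h, φ⟩ = 0. -/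
/-!
Project `h` onto `φᗮ` along `φ`: `u = h - c • φ` with `c = ⟪h, φ⟫ / ⟪φ, φ⟫`. Since `h ∈ ker L` and
`L` is symmetric, the quadratic form `⟪L ·, ·⟫` is invariant under translation by `h`, so
`0 ≤ ⟪L u, u⟫ = c ^ 2 * ⟪L φ, φ⟫`, which forces `c = 0` because `⟪L φ, φ⟫ < 0`.
-/

open RealInnerProductSpace

section

variable {H : Type*} [NormedAddCommGroup H] [InnerProductSpace ℝ H]

theorem inner_sub_inner_div_inner_self_smul_eq_zero (h φ : H) :
    ⟪h - (⟪h, φ⟫ / ⟪φ, φ⟫) • φ, φ⟫ = 0 := by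
  rcases eq_or_ne φ 0 with rfl | hφ
  · simp
  · rw [inner_sub_left, real_inner_smul_left,
      div_mul_cancel₀ _ (inner_self_ne_zero.mpr hφ), sub_self]

theorem inner_map_add_self_of_map_eq_zero {L : H →ₗ[ℝ] H}
    (hsym : ∀ u v : H, ⟪L u, v⟫ = ⟪u, L v⟫) {h : H} (hker : L h = 0) (v : H) :
    ⟪L (v + h), v + h⟫ = ⟪L v, v⟫ := by
  rw [map_add, hker, add_zero, inner_add_right, hsym v h, hker, inner_zero_right, add_zero]

theorem inner_map_smul_self (L : H →ₗ[ℝ] H) (c : ℝ) (v : H) :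
    ⟪L (c • v), c • v⟫ = c ^ 2 * ⟪L v, v⟫ := by
  rw [map_smul, real_inner_smul_left, real_inner_smul_right]
  ring

end

theorem kernel_orthogonal_of_negative_direction_general
    {H : Type*} [NormedAddCommGroup H] [InnerProductSpace ℝ H]
    (L : H →ₗ[ℝ] H) (hsym : ∀ u v : H, ⟪L u, v⟫ = ⟪u, L v⟫)
    (φ : H)
    (hpos : ∀ u : H, ⟪u, φ⟫ = 0 → 0 ≤ ⟪L u, u⟫)
    (hneg : ⟪L φ, φ⟫ < 0) :
    ∀ h : H, L h = 0 → ⟪h, φ⟫ = 0 := by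
  intro h hker
  set c : ℝ := ⟪h, φ⟫ / ⟪φ, φ⟫
  have hquad : ⟪L (h - c • φ), h - c • φ⟫ = c ^ 2 * ⟪L φ, φ⟫ := by
    rw [sub_eq_neg_add, ← neg_smul, inner_map_add_self_of_map_eq_zero hsym hker,
      inner_map_smul_self, neg_sq]
  have hsq : c ^ 2 ≤ 0 := by
    refine nonpos_of_mul_nonneg_left ?_ hneg
    rw [← hquad]
    exact hpos _ (inner_sub_inner_div_inner_self_smul_eq_zero h φ)
  have hc0 : c = 0 := pow_eq_zero_iff two_ne_zero |>.mp (le_antisymm hsq (sq_nonneg c))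
  rcases div_eq_zero_iff.mp hc0 with hhφ | hφφ
  · exact hhφ
  · rw [inner_self_eq_zero.mp hφφ, inner_zero_right]

/-- If a symmetric operator `L` on a real inner product space is
nonnegative on the orthogonal complement of `φ` (with `⟪φ,φ⟫ = λ > 0`) and
`⟪Lφ,φ⟫ < 0`, then every element of the kernel of `L` is orthogonal to `φ`. -/
theorem kernel_orthogonal_of_negative_direction
    {H : Type*} [NormedAddCommGroup H] [InnerProductSpace ℝ H]
    (L : H →ₗ[ℝ] H) (hsym : ∀ u v : H, ⟪L u, v⟫ = ⟪u, L v⟫)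
    (φ : H) (lam : ℝ) (hlam : 0 < lam) (hφ : ⟪φ, φ⟫ = lam)
    (hpos : ∀ u : H, ⟪u, φ⟫ = 0 → 0 ≤ ⟪L u, u⟫)
    (hneg : ⟪L φ, φ⟫ < 0) :
    ∀ h : H, L h = 0 → ⟪h, φ⟫ = 0 :=
  kernel_orthogonal_of_negative_direction_general L hsym φ hpos hneg
end

section
/- Let α > 1/2, ω, a ∈ ℝ, T > 0. Every distributional solution φ ∈ L²[-T,T] of Λ^α φ + ωφ - φ² + a = 0 (in the sense that ⟨φ, Λ^α h⟩ + ω⟨φ,h⟩ - ⟨φ², h⟩ + a⟨1,h⟩ = 0 for all smooth test functions h) belongs to H^k[-T,T] for every k ∈ ℕ. -/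
open MeasureTheory intervalIntegral

/-- The `k`-th Fourier coefficient of a `2T`-periodic function on `[-T,T]`. -/
noncomputable def fourierCoeffT (T : ℝ) (f : ℝ → ℂ) (k : ℤ) : ℂ :=
  (1 / Real.sqrt (2 * T)) *
    ∫ x in (-T)..T, f x * Complex.exp (-(Complex.I * Real.pi * k * x / T))

/-!
Write `ĉ` for the Fourier coefficients of `φ` on `[-T, T]`. Since `φ ∈ L²`, Parseval turns the
coefficients of `φ²` into the convolution `ĉ ∗ ĉ`, and these are bounded because `φ² ∈ L¹`.
Away from `k = 0` the equation reads `σ k * ĉ k = (ĉ ∗ ĉ) k` with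
`σ k = (π|k|/T)^α + ω ≳ (1 + |k|)^α`, so decay of order `τ` of `ĉ ∗ ĉ` gives decay of order
`τ + α` of `ĉ`. Conversely, decay of order `γ` of `ĉ` gives decay of order `γ - (α/2 + 1/4)` of
`ĉ ∗ ĉ`, since `∑ (1 + |j|)^(-(α + 1/2))` converges. Each round gains `α/2 - 1/4 > 0`, so `ĉ`
decays faster than any power of `|k|` and all Sobolev sums converge.
-/

open Asymptotics Filter

theorem summable_one_add_abs_int_rpow_neg {ρ : ℝ} (hρ : 1 < ρ) :
    Summable fun j : ℤ => (1 + |(j : ℝ)|) ^ (-ρ) := by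
  refine (Real.summable_abs_int_rpow hρ).of_norm_bounded_eventually ?_
  filter_upwards [eventually_cofinite_ne 0] with j hj
  have hj : 0 < |(j : ℝ)| := abs_pos.mpr (by exact_mod_cast hj)
  rw [Real.norm_of_nonneg (by positivity)]
  exact Real.rpow_le_rpow_of_nonpos hj (by linarith) (by linarith)

theorem isBigO_one_add_abs_rpow_neg_of_le {β γ : ℝ} (h : β ≤ γ) :
    (fun k : ℤ => (1 + |(k : ℝ)|) ^ (-γ)) =O[cofinite] fun k : ℤ => (1 + |(k : ℝ)|) ^ (-β) :=
  IsBigO.of_bound 1 (.of_forall fun k => by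
    rw [Real.norm_of_nonneg (by positivity), Real.norm_of_nonneg (by positivity), one_mul]
    exact Real.rpow_le_rpow_of_exponent_le (by simp) (by linarith))

theorem one_add_abs_rpow_neg_mul_le {β τ : ℝ} (hτ : 0 ≤ τ) (x y : ℝ) :
    (1 + |x|) ^ (-β) * (1 + |y|) ^ (-β) ≤
      (1 + |x + y|) ^ (-τ) *
        (((1 + |x|) ^ (-(2 * (β - τ))) + (1 + |y|) ^ (-(2 * (β - τ)))) / 2) := by
  have hx : 0 < 1 + |x| := by positivity
  have hy : 0 < 1 + |y| := by positivity
  have hsub : 1 + |x + y| ≤ (1 + |x|) * (1 + |y|) := by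
    nlinarith [abs_add_le x y, abs_nonneg x, abs_nonneg y, mul_nonneg (abs_nonneg x) (abs_nonneg y)]
  set p := (1 + |x|) ^ (-(β - τ))
  set q := (1 + |y|) ^ (-(β - τ))
  have hp : (1 + |x|) ^ (-(2 * (β - τ))) = p ^ 2 := by
    rw [← Real.rpow_natCast, ← Real.rpow_mul hx.le]; ring_nf
  have hq : (1 + |y|) ^ (-(2 * (β - τ))) = q ^ 2 := by
    rw [← Real.rpow_natCast, ← Real.rpow_mul hy.le]; ring_nf
  calc (1 + |x|) ^ (-β) * (1 + |y|) ^ (-β)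
      = ((1 + |x|) * (1 + |y|)) ^ (-τ) * (p * q) := by
        rw [Real.mul_rpow hx.le hy.le, mul_mul_mul_comm, ← Real.rpow_add hx, ← Real.rpow_add hy]
        ring_nf
    _ ≤ (1 + |x + y|) ^ (-τ) * ((p ^ 2 + q ^ 2) / 2) := by
        gcongr ?_ * ?_
        · exact Real.rpow_le_rpow_of_nonpos (by positivity) hsub (by linarith)
        · nlinarith [sq_nonneg (p - q)]
    _ = _ := by rw [hp, hq]

theorem isBigO_convolution_of_isBigO {u v : ℤ → ℂ} {β τ : ℝ} (hτ : 0 ≤ τ)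
    (hρ : 1 < 2 * (β - τ))
    (hu : u =O[cofinite] fun j => (1 + |(j : ℝ)|) ^ (-β))
    (hv : v =O[cofinite] fun j => (1 + |(j : ℝ)|) ^ (-β)) :
    (fun k => ∑' j, u (k - j) * v j) =O[cofinite] fun k => (1 + |(k : ℝ)|) ^ (-τ) := by
  have hpos : ∀ x : ℝ, 0 < (1 + |x|) ^ (-β) := fun x => by positivity
  have hbound {w : ℤ → ℂ} (hw : w =O[cofinite] fun j => (1 + |(j : ℝ)|) ^ (-β)) :
      ∃ C, 0 ≤ C ∧ ∀ j : ℤ, ‖w j‖ ≤ C * (1 + |(j : ℝ)|) ^ (-β) := by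
    obtain ⟨C, hC⟩ := (isBigO_cofinite_iff fun (j : ℤ) h => absurd h (hpos j).ne').mp hw
    simp only [Real.norm_of_nonneg (hpos _).le] at hC
    exact ⟨C, nonneg_of_mul_nonneg_left ((norm_nonneg _).trans (hC 0)) (hpos _), hC⟩
  obtain ⟨Cu, hCu0, hCu⟩ := hbound hu
  obtain ⟨Cv, hCv0, hCv⟩ := hbound hv
  set ρ := 2 * (β - τ)
  set S := ∑' j : ℤ, (1 + |(j : ℝ)|) ^ (-ρ)
  have hS : HasSum (fun j : ℤ => (1 + |(j : ℝ)|) ^ (-ρ)) S :=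
    (summable_one_add_abs_int_rpow_neg hρ).hasSum
  have hS' (k : ℤ) : HasSum (fun j : ℤ => (1 + |((k - j : ℤ) : ℝ)|) ^ (-ρ)) S :=
    (Equiv.subLeft k).hasSum_iff.mpr hS
  refine IsBigO.of_bound (Cu * Cv * S) (.of_forall fun k => ?_)
  refine tsum_of_norm_bounded (g := fun j => Cu * Cv * ((1 + |(k : ℝ)|) ^ (-τ) *
      (((1 + |((k - j : ℤ) : ℝ)|) ^ (-ρ) + (1 + |(j : ℝ)|) ^ (-ρ)) / 2)))
    (((((hS' k).add hS).div_const 2).mul_left _).mul_left _) (fun j => ?_) |>.trans_eq ?_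
  · have hk := one_add_abs_rpow_neg_mul_le (β := β) hτ ((k - j : ℤ) : ℝ) j
    rw [show ((k - j : ℤ) : ℝ) + j = k by push_cast; ring] at hk
    calc ‖u (k - j) * v j‖ = ‖u (k - j)‖ * ‖v j‖ := norm_mul _ _
      _ ≤ (Cu * (1 + |((k - j : ℤ) : ℝ)|) ^ (-β)) * (Cv * (1 + |(j : ℝ)|) ^ (-β)) := by
        gcongr
        · exact hCu _
        · exact hCv _
      _ = Cu * Cv * ((1 + |((k - j : ℤ) : ℝ)|) ^ (-β) * (1 + |(j : ℝ)|) ^ (-β)) := by ring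
      _ ≤ _ := by gcongr
  · rw [Real.norm_of_nonneg (by positivity)]; ring

theorem isBigO_div_of_mul_eq {ι 𝕜 : Type*} [NormedField 𝕜] {l : Filter ι} {σ c d : ι → 𝕜}
    {u v : ι → ℝ} (hv : ∀ᶠ i in l, v i ≠ 0) (hσ : v =O[l] σ)
    (heq : ∀ᶠ i in l, σ i * c i = d i) (hd : d =O[l] u) :
    c =O[l] fun i => u i / v i := by
  have hσinv : (fun i => (σ i)⁻¹) =O[l] fun i => (v i)⁻¹ :=
    hσ.inv_rev (hv.mono fun i hi h => absurd h hi)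
  have hc : (fun i => (σ i)⁻¹ * d i) =ᶠ[l] c := by
    filter_upwards [heq, hv, hσ.eq_zero_imp] with i hi hvi hσi
    rw [← hi, inv_mul_cancel_left₀ fun h => hvi (hσi h)]
  exact ((hσinv.mul hd).congr' hc (.of_forall fun i => by ring))

theorem isBigO_one_add_abs_rpow_symbol {α T : ℝ} (hα : 0 < α) (hT : 0 < T) (ω : ℝ) :
    (fun k : ℤ => (1 + |(k : ℝ)|) ^ α) =O[cofinite]
      fun k : ℤ => (((Real.pi * |(k : ℝ)| / T) ^ α + ω : ℝ) : ℂ) := by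
  set x : ℤ → ℝ := fun k => (Real.pi * |(k : ℝ)| / T) ^ α
  have habs : Tendsto (fun k : ℤ => |(k : ℝ)|) cofinite atTop :=
    tendsto_norm_cocompact_atTop.comp Int.tendsto_coe_cofinite
  have hx : Tendsto x cofinite atTop :=
    (tendsto_rpow_atTop hα).comp (habs.const_mul_atTop (by positivity) |>.atTop_div_const hT)
  have hlow : (fun k : ℤ => (1 + |(k : ℝ)|) ^ α) =O[cofinite] x := by
    refine IsBigO.of_bound ((2 * T / Real.pi) ^ α) ?_
    filter_upwards [eventually_cofinite_ne 0] with k hk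
    have hk : 1 ≤ |(k : ℝ)| := by exact_mod_cast Int.one_le_abs hk
    rw [Real.norm_of_nonneg (by positivity), Real.norm_of_nonneg (by positivity),
      ← Real.mul_rpow (by positivity) (by positivity)]
    gcongr
    field_simp
    linarith
  have hω : (fun _ : ℤ => ω) =o[cofinite] x :=
    isLittleO_const_left.mpr (.inr (tendsto_norm_atTop_atTop.comp hx))
  exact Complex.isBigO_ofReal_right.mpr (hlow.trans hω.right_isBigO_add')

theorem isBigO_one_add_abs_rpow_neg_of_hasSum_mul {α : ℝ} (hα : 1 / 2 < α) {σ c d : ℤ → ℂ}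
    (hσ : (fun k : ℤ => (1 + |(k : ℝ)|) ^ α) =O[cofinite] σ)
    (heq : ∀ᶠ k in cofinite, σ k * c k = d k)
    (hconv : ∀ k, HasSum (fun j => c (k - j) * c j) (d k))
    (hd : d =O[cofinite] fun _ => (1 : ℝ)) (β : ℝ) :
    c =O[cofinite] fun k : ℤ => (1 + |(k : ℝ)|) ^ (-β) := by
  have hgain {τ γ : ℝ} (hγ : γ = τ + α)
      (hτ : d =O[cofinite] fun k : ℤ => (1 + |(k : ℝ)|) ^ (-τ)) :
      c =O[cofinite] fun k : ℤ => (1 + |(k : ℝ)|) ^ (-γ) := by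
    refine (isBigO_div_of_mul_eq (.of_forall fun k => by positivity) hσ heq hτ).congr_right
      fun k => ?_
    rw [hγ, neg_add, Real.rpow_add (by positivity),
      Real.rpow_neg (by positivity : (0 : ℝ) ≤ 1 + |(k : ℝ)|) α, div_eq_mul_inv]
  have hstep {γ : ℝ} (hγ : α ≤ γ) (hc : c =O[cofinite] fun k : ℤ => (1 + |(k : ℝ)|) ^ (-γ)) :
      c =O[cofinite] fun k : ℤ => (1 + |(k : ℝ)|) ^ (-(γ + (α / 2 - 1 / 4))) :=
    hgain (τ := γ - (α / 2 + 1 / 4)) (by ring) <|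
      (isBigO_convolution_of_isBigO (by linarith) (by linarith) hc hc).congr_left
        fun k => (hconv k).tsum_eq
  have hiter (n : ℕ) :
      c =O[cofinite] fun k : ℤ => (1 + |(k : ℝ)|) ^ (-(α + n * (α / 2 - 1 / 4))) := by
    induction n with
    | zero => exact hgain (τ := 0) (by simp) (by simpa only [neg_zero, Real.rpow_zero] using hd)
    | succ n ih =>
      refine (hstep ?_ ih).congr_right fun k => by push_cast; ring_nf
      nlinarith [(n.cast_nonneg : (0 : ℝ) ≤ n)]
  obtain ⟨n, hn⟩ := exists_nat_ge ((β - α) / (α / 2 - 1 / 4))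
  refine (hiter n).trans (isBigO_one_add_abs_rpow_neg_of_le ?_)
  rw [div_le_iff₀ (by linarith)] at hn
  linarith

theorem summable_one_add_sq_rpow_mul_norm_sq {c : ℤ → ℂ} {s β : ℝ} (hs : 0 ≤ s)
    (hβ : 1 < 2 * (β - s)) (hc : c =O[cofinite] fun k : ℤ => (1 + |(k : ℝ)|) ^ (-β)) :
    Summable fun k : ℤ => (1 + (k : ℝ) ^ 2) ^ s * ‖c k‖ ^ 2 := by
  refine summable_of_isBigO (summable_one_add_abs_int_rpow_neg hβ) ?_
  obtain ⟨C, hC⟩ := hc.bound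
  refine IsBigO.of_bound (C ^ 2) ?_
  filter_upwards [hC] with k hk
  set X := 1 + |(k : ℝ)|
  have hX : 0 < X := by positivity
  rw [Real.norm_of_nonneg (by positivity)] at hk
  rw [Real.norm_of_nonneg (by positivity), Real.norm_of_nonneg (by positivity)]
  calc (1 + (k : ℝ) ^ 2) ^ s * ‖c k‖ ^ 2 ≤ (X ^ 2) ^ s * (C * X ^ (-β)) ^ 2 := by
        gcongr
        nlinarith [sq_abs (k : ℝ), abs_nonneg (k : ℝ)]
    _ = C ^ 2 * X ^ (-(2 * (β - s))) := by
        rw [← Real.rpow_natCast, ← Real.rpow_mul hX.le, mul_pow, ← Real.rpow_natCast (X ^ (-β)),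
          ← Real.rpow_mul hX.le, mul_left_comm, ← Real.rpow_add hX]
        push_cast
        ring_nf

open AddCircle ComplexConjugate in
theorem hasSum_fourierCoeff_mul {T : ℝ} [Fact (0 < T)] {F G : AddCircle T → ℂ}
    (hF : MemLp F 2 haarAddCircle) (hG : MemLp G 2 haarAddCircle) (k : ℤ) :
    HasSum (fun j => fourierCoeff F (k - j) * fourierCoeff G j) (fourierCoeff (F * G) k) := by
  -- Parseval `⟪H, G⟫ = ∑ ⟪H, eⱼ⟫ ⟪eⱼ, G⟫`, with `H` chosen so that `⟪H, eⱼ⟫ = F̂ (k - j)`.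
  set H : AddCircle T → ℂ := fun t => fourier k t * conj (F t)
  have hH : MemLp H 2 haarAddCircle :=
    hF.star.of_le (((map_continuous (fourier k)).aestronglyMeasurable).mul hF.star.1)
      (.of_forall fun t => by simp [H, Circle.norm_coe])
  have key := fourierBasis.hasSum_inner_mul_inner (hH.toLp H) (hG.toLp G)
  have hconj : ∀ j, inner ℂ (hH.toLp H) (fourierBasis j) = fourierCoeff F (k - j) := by
    intro j
    rw [← inner_conj_symm, ← HilbertBasis.repr_apply_apply, fourierBasis_repr,
      fourierCoeff_congr_ae hH.coeFn_toLp, fourierCoeff, fourierCoeff, ← integral_conj]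
    congr 1 with t
    simp only [H, smul_eq_mul, map_mul, Complex.conj_conj, ← fourier_neg, ← mul_assoc,
      ← fourier_add]
    ring_nf
  have hrepr : ∀ j, inner ℂ (fourierBasis j) (hG.toLp G) = fourierCoeff G j := by
    intro j
    rw [← HilbertBasis.repr_apply_apply, fourierBasis_repr, fourierCoeff_congr_ae hG.coeFn_toLp]
  have hinner : inner ℂ (hH.toLp H) (hG.toLp G) = fourierCoeff (F * G) k := by
    rw [L2.inner_def, fourierCoeff]
    refine integral_congr_ae ?_
    filter_upwards [hH.coeFn_toLp, hG.coeFn_toLp] with t hHt hGt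
    simp only [hHt, hGt, H, RCLike.inner_apply, map_mul, Complex.conj_conj, ← fourier_neg,
      smul_eq_mul, Pi.mul_apply]
    ring
  simpa only [hconj, hrepr, hinner] using key

theorem hasSum_fourierCoeffOn_mul {a b : ℝ} (hab : a < b) {f g : ℝ → ℂ}
    (hf : MemLp f 2 (volume.restrict (Set.Ioc a b)))
    (hg : MemLp g 2 (volume.restrict (Set.Ioc a b))) (k : ℤ) :
    HasSum (fun j => fourierCoeffOn hab f (k - j) * fourierCoeffOn hab g j)
      (fourierCoeffOn hab (f * g) k) := by
  have := Fact.mk (by linarith : 0 < b - a)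
  rw [← add_sub_cancel a b] at hf hg
  exact hasSum_fourierCoeff_mul hf.memLp_liftIoc.haarAddCircle
    hg.memLp_liftIoc.haarAddCircle k

theorem fourierCoeffOn_eq_zero_of_not_intervalIntegrable {a b : ℝ} (hab : a < b) {f : ℝ → ℂ}
    (hf : ¬ IntervalIntegrable f volume a b) : fourierCoeffOn hab f = 0 := by
  ext n
  rw [Pi.zero_apply, fourierCoeffOn_eq_integral, intervalIntegral.integral_undef, smul_zero]
  refine fun hint => hf ?_
  have hcont : Continuous fun x : ℝ => fourier n (x : AddCircle (b - a)) :=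
    (map_continuous _).comp (AddCircle.continuous_mk' _)
  refine (hint.mul_continuousOn hcont.continuousOn).congr fun x _ => ?_
  simp only [smul_eq_mul]
  rw [mul_comm, ← mul_assoc, ← fourier_add, add_neg_cancel, fourier_zero, one_mul]

theorem norm_fourierCoeffOn_le {a b : ℝ} (hab : a < b) (f : ℝ → ℂ) (n : ℤ) :
    ‖fourierCoeffOn hab f n‖ ≤ (b - a)⁻¹ * ∫ x in a..b, ‖f x‖ := by
  rw [fourierCoeffOn_eq_integral, norm_smul, one_div, norm_inv, Real.norm_of_nonneg (by linarith)]
  gcongr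
  refine (intervalIntegral.norm_integral_le_integral_norm hab.le).trans_eq
    (integral_congr fun x _ => ?_)
  simp only [norm_smul, fourier_apply, Circle.norm_coe, one_mul]

theorem fourierCoeffT_eq_sqrt_mul_fourierCoeffOn {T : ℝ} (hT : 0 < T) (f : ℝ → ℂ) (k : ℤ) :
    fourierCoeffT T f k = Real.sqrt (2 * T) * fourierCoeffOn (neg_lt_self hT) f k := by
  have hsqrt : (Real.sqrt (2 * T) : ℂ) ^ 2 = 2 * T := by
    rw [← Complex.ofReal_pow, Real.sq_sqrt (by positivity)]; push_cast; ring
  have hsqrt0 : (Real.sqrt (2 * T) : ℂ) ≠ 0 := by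
    exact_mod_cast (Real.sqrt_pos.mpr (by positivity : 0 < 2 * T)).ne'
  rw [fourierCoeffT, fourierCoeffOn_eq_integral, Complex.real_smul, ← mul_assoc]
  congr 1
  · rw [sub_neg_eq_add, ← two_mul]
    field_simp
    rw [hsqrt]
    push_cast
    field_simp [hT.ne']
  · refine integral_congr fun x _ => ?_
    rw [fourier_coe_apply, smul_eq_mul, mul_comm]
    congr 2
    push_cast
    field_simp
    ring

theorem a_posteriori_smoothness_general
    (α ω a T : ℝ) (hα : 1 / 2 < α) (hT : 0 < T)
    (φ : ℝ → ℝ)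
    (hL2 : IntervalIntegrable (fun x => (φ x) ^ 2) volume (-T) T)
    (heq : ∀ k : ℤ,
      (((Real.pi * |(k : ℝ)| / T) ^ α + ω : ℝ) : ℂ) *
          fourierCoeffT T (fun x => (φ x : ℂ)) k
        - fourierCoeffT T (fun x => ((φ x : ℂ)) ^ 2) k
        + (a : ℂ) * (Real.sqrt (2 * T) : ℂ) * (if k = 0 then 1 else 0) = 0) :
    ∀ m : ℕ, Summable fun k : ℤ =>
      (1 + (k : ℝ) ^ 2) ^ (m : ℝ) * ‖fourierCoeffT T (fun x => (φ x : ℂ)) k‖ ^ 2 := by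
  intro m
  set f : ℝ → ℂ := fun x => (φ x : ℂ)
  set c := fourierCoeffOn (neg_lt_self hT) f
  have hcT (g : ℝ → ℂ) := fourierCoeffT_eq_sqrt_mul_fourierCoeffOn hT g
  suffices hc : c =O[cofinite] fun k : ℤ => (1 + |(k : ℝ)|) ^ (-(m + 1 : ℝ)) by
    simp only [hcT]
    exact summable_one_add_sq_rpow_mul_norm_sq m.cast_nonneg (by linarith) (hc.const_mul_left _)
  -- `φ² ∈ L¹` does not make `φ` measurable; a non-integrable `φ` has junk coefficients `0`.
  by_cases hf : IntervalIntegrable f volume (-T) T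
  swap
  · rw [show c = 0 from fourierCoeffOn_eq_zero_of_not_intervalIntegrable _ hf]
    exact isBigO_zero _ _
  have hmem : MemLp f 2 (volume.restrict (Set.Ioc (-T) T)) :=
    (memLp_two_iff_integrable_sq_norm hf.1.aestronglyMeasurable).mpr <|
      hL2.1.congr_fun (fun x _ => by simp [f]) measurableSet_Ioc
  refine isBigO_one_add_abs_rpow_neg_of_hasSum_mul hα
    (isBigO_one_add_abs_rpow_symbol (by linarith) hT ω) ?_
    (hasSum_fourierCoeffOn_mul _ hmem hmem) ?_ _
  · filter_upwards [eventually_cofinite_ne 0] with k hk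
    have hsq : (fun x => (φ x : ℂ) ^ 2) = f * f := funext fun x => sq _
    have hsqrt : (Real.sqrt (2 * T) : ℂ) ≠ 0 := by
      exact_mod_cast (Real.sqrt_pos.mpr (by positivity : 0 < 2 * T)).ne'
    have hmode := heq k
    rw [if_neg hk, hcT, hcT, hsq, mul_zero, add_zero, sub_eq_zero, mul_left_comm] at hmode
    exact mul_left_cancel₀ hsqrt hmode
  · exact IsBigO.of_bound _ (.of_forall fun k => by
      simpa using norm_fourierCoeffOn_le (neg_lt_self hT) (f * f) k)

/-- A posteriori smoothness.  Let `α > 1/2` and let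
`φ ∈ L²[-T,T]` be a distributional solution of `Λ^α φ + ωφ - φ² + a = 0`,
expressed mode by mode on the Fourier side (which is equivalent to testing
against all `H^∞` functions):
`((π|k|/T)^α + ω)·φ̂(k) - (φ²)^(k) + a√(2T)·δ_{k0} = 0` for all `k ∈ ℤ`.
Then `φ` belongs to `H^k[-T,T]` for every `k ∈ ℕ`, i.e. all the weighted
Fourier series `∑ (1+|k|²)^m |φ̂(k)|²` converge. -/
theorem a_posteriori_smoothness
    (α ω a T : ℝ) (hα : 1 / 2 < α) (hT : 0 < T)
    (φ : ℝ → ℝ)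
    (hper : Function.Periodic φ (2 * T))
    (hL2 : IntervalIntegrable (fun x => (φ x) ^ 2) volume (-T) T)
    (hsum : Summable fun k : ℤ => ‖fourierCoeffT T (fun x => (φ x : ℂ)) k‖ ^ 2)
    (heq : ∀ k : ℤ,
      (((Real.pi * |(k : ℝ)| / T) ^ α + ω : ℝ) : ℂ) *
          fourierCoeffT T (fun x => (φ x : ℂ)) k
        - fourierCoeffT T (fun x => ((φ x : ℂ)) ^ 2) k
        + (a : ℂ) * (Real.sqrt (2 * T) : ℂ) * (if k = 0 then 1 else 0) = 0) :
    ∀ m : ℕ, Summable fun k : ℤ =>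
      (1 + (k : ℝ) ^ 2) ^ (m : ℝ) * ‖fourierCoeffT T (fun x => (φ x : ℂ)) k‖ ^ 2 :=
  a_posteriori_smoothness_general α ω a T hα hT φ hL2 heq
end

section
/- Let L be a symmetric operator on a real inner product space with Lφ' = 0 for a nonzero vector φ', and suppose ⟨Lu,u⟩ ≥ 0 for all u in the orthogonal complement of a vector φ (with φ not proportional to φ'). Then L has at most one negative eigenvalue counted with multiplicity; and if additionally the ground state eigenfunction must be of one sign while φ' changes sign, then L has exactly one negative eigenvalue. -/
open RealInnerProductSpace

/-- Let `L` be symmetric with `L φ' = 0`, `φ' ≠ 0`, and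
`⟪Lu,u⟫ ≥ 0` for all `u ⊥ φ`.  Then:
(1) `L` has at most one negative eigenvalue counted with multiplicity, i.e.
there is no pair of orthogonal nonzero eigenvectors with negative eigenvalues;
(2) if moreover there is a simple ground state eigenvector `ψ` (lowest
eigenvalue, one-dimensional eigenspace) to which the sign-changing kernel
element `φ'` is not proportional, then `L` has a negative eigenvalue. -/
theorem morse_index_one_of_constrained_minimizer
    {H : Type*} [NormedAddCommGroup H] [InnerProductSpace ℝ H]
    (L : H →ₗ[ℝ] H) (hsym : ∀ u v : H, ⟪L u, v⟫ = ⟪u, L v⟫)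
    (φ φ' : H) (hφ' : φ' ≠ 0) (hker : L φ' = 0)
    (hpos : ∀ u : H, ⟪u, φ⟫ = 0 → 0 ≤ ⟪L u, u⟫) :
    (∀ (u v : H) (μ ν : ℝ), u ≠ 0 → v ≠ 0 → ⟪u, v⟫ = 0 →
        L u = μ • u → L v = ν • v → μ < 0 → ν < 0 → False) ∧
    (∀ (ψ : H) (μ₀ : ℝ), ψ ≠ 0 → L ψ = μ₀ • ψ →
        (∀ (v : H) (ν : ℝ), v ≠ 0 → L v = ν • v → μ₀ ≤ ν) →
        (∀ v : H, L v = μ₀ • v → ∃ c : ℝ, v = c • ψ) →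
        (¬ ∃ c : ℝ, φ' = c • ψ) →
        ∃ μ : ℝ, μ < 0 ∧ ∃ v : H, v ≠ 0 ∧ L v = μ • v) := by
  constructor
  · intro u v μ ν hu hv huv hLu hLv hμ hν
    by_cases hup : ⟪u, φ⟫ = 0
    · have h0 := hpos u hup
      rw [hLu, real_inner_smul_left] at h0
      have hu2 : 0 < ⟪u, u⟫ := by have := norm_pos_iff.mpr hu; rw [real_inner_self_eq_norm_sq u]; positivity
      nlinarith
    · set a := ⟪v, φ⟫ with ha
      set b := -⟪u, φ⟫ with hbdef
      have hw : ⟪a • u + b • v, φ⟫ = 0 := by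
        simp only [inner_add_left, real_inner_smul_left, ha, hbdef]
        ring
      have h0 := hpos _ hw
      have hLw : L (a • u + b • v) = (μ * a) • u + (ν * b) • v := by
        simp [map_add, map_smul, hLu, hLv, smul_smul, mul_comm]
      rw [hLw] at h0
      have hvu : ⟪v, u⟫ = 0 := by rw [real_inner_comm]; exact huv
      have hexp : ⟪(μ * a) • u + (ν * b) • v, a • u + b • v⟫
          = μ * a ^ 2 * ⟪u, u⟫ + ν * b ^ 2 * ⟪v, v⟫ := by
        simp only [inner_add_left, inner_add_right, real_inner_smul_left,
          real_inner_smul_right, huv, hvu]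
        ring
      rw [hexp] at h0
      have hu2 : 0 < ⟪u, u⟫ := by have := norm_pos_iff.mpr hu; rw [real_inner_self_eq_norm_sq u]; positivity
      have hv2 : 0 < ⟪v, v⟫ := by have := norm_pos_iff.mpr hv; rw [real_inner_self_eq_norm_sq v]; positivity
      have hb : b ≠ 0 := by simpa [hbdef] using hup
      have hb2 : 0 < b ^ 2 := by positivity
      have h1 : ν * b ^ 2 * ⟪v, v⟫ < 0 :=
        mul_neg_of_neg_of_pos (mul_neg_of_neg_of_pos hν hb2) hv2
      have h2 : μ * a ^ 2 * ⟪u, u⟫ ≤ 0 := by nlinarith [mul_nonneg (sq_nonneg a) hu2.le]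
      linarith
  · intro ψ μ₀ hψ hLψ hlow hsimple hnp
    have h0 : μ₀ ≤ 0 := hlow φ' 0 hφ' (by simp [hker])
    rcases lt_or_eq_of_le h0 with h | h
    · exact ⟨μ₀, h, ψ, hψ, hLψ⟩
    · exact absurd (hsimple φ' (by rw [hker, h, zero_smul])) hnp
end

section
/- Let H be a real Hilbert space, L : H → H symmetric and bounded, κ > 0, and let φ, φ' ∈ H be nonzero. Suppose ⟨Lη,η⟩ ≥ κ‖η‖² for all η ⊥ span{φ, φ'}. Let ψ = μφ + η with η ⊥ span{φ,φ'} and μ ∈ ℝ. Then ⟨Lψ,ψ⟩ ≥ κ‖η‖² - C(μ² + |μ|·‖η‖) where C depends only on ‖L‖ and ‖φ‖; consequently, if |μ| ≤ ε(δ + ‖ψ‖²) for constants ε, δ, then ⟨Lψ,ψ⟩ ≥ (κ/2)‖η‖² - C'(δ + ‖ψ‖³) for suitable C'. -/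
open RealInnerProductSpace

set_option maxHeartbeats 1000000

/-- Coercivity estimate for the energy method.  Let `L` be a
bounded symmetric operator, coercive with constant `κ` on the orthogonal
complement of `span{φ, φ'}`.  For `ψ = μ • φ + η` with `η ⊥ φ, φ'` one has
`⟪Lψ,ψ⟫ ≥ κ‖η‖² - C(μ² + |μ|‖η‖)` with `C = ‖L‖(‖φ‖+1)²` depending only on
`‖L‖` and `‖φ‖`; consequently, for any `ε ≥ 0` there is `C' > 0` such that
whenever additionally `|μ| ≤ ε(δ + ‖ψ‖²)` with `0 ≤ δ ≤ 1` and `‖ψ‖ ≤ 1`,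
then `⟪Lψ,ψ⟫ ≥ (κ/2)‖η‖² - C'(δ + ‖ψ‖³)`. -/
theorem coercivity_estimate
    {H : Type*} [NormedAddCommGroup H] [InnerProductSpace ℝ H]
    (L : H →L[ℝ] H) (hsym : ∀ u v : H, ⟪L u, v⟫ = ⟪u, L v⟫)
    (κ : ℝ) (hκ : 0 < κ) (φ φ' : H) (hφ : φ ≠ 0) (hφ' : φ' ≠ 0)
    (hcoer : ∀ η : H, ⟪η, φ⟫ = 0 → ⟪η, φ'⟫ = 0 → κ * ‖η‖ ^ 2 ≤ ⟪L η, η⟫) :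
    (∀ (μ : ℝ) (η ψ : H), ⟪η, φ⟫ = 0 → ⟪η, φ'⟫ = 0 → ψ = μ • φ + η →
        κ * ‖η‖ ^ 2 - ‖L‖ * (‖φ‖ + 1) ^ 2 * (μ ^ 2 + |μ| * ‖η‖) ≤ ⟪L ψ, ψ⟫) ∧
    (∀ ε : ℝ, 0 ≤ ε → ∃ C' : ℝ, 0 < C' ∧
        ∀ (μ δ : ℝ) (η ψ : H), ⟪η, φ⟫ = 0 → ⟪η, φ'⟫ = 0 → ψ = μ • φ + η →
          0 ≤ δ → δ ≤ 1 → ‖ψ‖ ≤ 1 → |μ| ≤ ε * (δ + ‖ψ‖ ^ 2) →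
          (κ / 2) * ‖η‖ ^ 2 - C' * (δ + ‖ψ‖ ^ 3) ≤ ⟪L ψ, ψ⟫) := by
  have hL0 : (0:ℝ) ≤ ‖L‖ := norm_nonneg _
  have hφ0 : (0:ℝ) < ‖φ‖ := norm_pos_iff.mpr hφ
  set C : ℝ := ‖L‖ * (‖φ‖ + 1) ^ 2 with hCdef
  have hC0 : 0 ≤ C := by positivity
  have key : ∀ (μ : ℝ) (η ψ : H), ⟪η, φ⟫ = 0 → ⟪η, φ'⟫ = 0 → ψ = μ • φ + η →
      κ * ‖η‖ ^ 2 - C * (μ ^ 2 + |μ| * ‖η‖) ≤ ⟪L ψ, ψ⟫ := by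
    intro μ η ψ h1 h2 hψ
    have hsy : ⟪L η, φ⟫ = ⟪L φ, η⟫ := by rw [hsym η φ, real_inner_comm]
    have hexp : ⟪L ψ, ψ⟫ = μ ^ 2 * ⟪L φ, φ⟫ + 2 * μ * ⟪L φ, η⟫ + ⟪L η, η⟫ := by
      subst hψ
      simp only [map_add, map_smul, inner_add_left, inner_add_right,
        inner_smul_left, inner_smul_right, RCLike.conj_to_real, hsy]
      ring
    have hb1 : |⟪L φ, φ⟫| ≤ ‖L‖ * ‖φ‖ * ‖φ‖ := by
      calc |⟪L φ, φ⟫| ≤ ‖L φ‖ * ‖φ‖ := abs_real_inner_le_norm _ _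
        _ ≤ ‖L‖ * ‖φ‖ * ‖φ‖ := by
            have := L.le_opNorm φ
            nlinarith [norm_nonneg φ]
    have hb2 : |⟪L φ, η⟫| ≤ ‖L‖ * ‖φ‖ * ‖η‖ := by
      calc |⟪L φ, η⟫| ≤ ‖L φ‖ * ‖η‖ := abs_real_inner_le_norm _ _
        _ ≤ ‖L‖ * ‖φ‖ * ‖η‖ := by
            have := L.le_opNorm φ
            nlinarith [norm_nonneg η]
    have hc : κ * ‖η‖ ^ 2 ≤ ⟪L η, η⟫ := hcoer η h1 h2
    have h3 : -(C * μ ^ 2) ≤ μ ^ 2 * ⟪L φ, φ⟫ := by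
      have h := (abs_le.mp hb1).1
      nlinarith [sq_nonneg μ, norm_nonneg φ,
        mul_nonneg (mul_nonneg hL0 (by nlinarith : (0:ℝ) ≤ 2 * ‖φ‖ + 1)) (sq_nonneg μ)]
    have h4 : -(C * (|μ| * ‖η‖)) ≤ 2 * μ * ⟪L φ, η⟫ := by
      have h5 : -(|μ| * |⟪L φ, η⟫|) ≤ μ * ⟪L φ, η⟫ := by
        rw [← abs_mul]; exact neg_abs_le _
      have h6 : |μ| * |⟪L φ, η⟫| ≤ |μ| * (‖L‖ * ‖φ‖ * ‖η‖) :=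
        mul_le_mul_of_nonneg_left hb2 (abs_nonneg μ)
      have h7 : 2 * (‖L‖ * ‖φ‖) ≤ C := by
        rw [hCdef]; nlinarith [sq_nonneg (‖φ‖ - 1)]
      nlinarith [mul_nonneg (abs_nonneg μ) (norm_nonneg η)]
    rw [hexp]; linarith
  refine ⟨key, ?_⟩
  intro ε hε
  refine ⟨C * ε * (1 / ‖φ‖ + 1) + 1, by positivity, ?_⟩
  intro μ δ η ψ h1 h2 hψ hδ0 hδ1 hψ1 hμ
  have hψ0 : (0:ℝ) ≤ ‖ψ‖ := norm_nonneg ψ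
  have hpyth : ‖ψ‖ ^ 2 = μ ^ 2 * ‖φ‖ ^ 2 + ‖η‖ ^ 2 := by
    rw [hψ, @norm_add_sq_real, norm_smul, inner_smul_left]
    rw [real_inner_comm] at h1
    simp [h1, mul_pow]
  have hμφ : |μ| * ‖φ‖ ≤ ‖ψ‖ := by
    apply le_of_pow_le_pow_left₀ two_ne_zero hψ0
    rw [mul_pow, sq_abs]
    nlinarith [sq_nonneg ‖η‖]
  have hηψ : ‖η‖ ≤ ‖ψ‖ := by
    apply le_of_pow_le_pow_left₀ two_ne_zero hψ0
    nlinarith [sq_nonneg (μ * ‖φ‖)]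
  have hμ1 : |μ| ≤ ‖ψ‖ * (1 / ‖φ‖) := by
    rw [mul_one_div, le_div_iff₀ hφ0]; exact hμφ
  have hstep : ‖ψ‖ * (δ + ‖ψ‖ ^ 2) ≤ δ + ‖ψ‖ ^ 3 := by nlinarith
  have hμsq : μ ^ 2 ≤ 1 / ‖φ‖ * ε * (δ + ‖ψ‖ ^ 3) := by
    calc μ ^ 2 = |μ| * |μ| := by rw [← sq_abs]; ring
      _ ≤ (‖ψ‖ * (1 / ‖φ‖)) * (ε * (δ + ‖ψ‖ ^ 2)) :=
          mul_le_mul hμ1 hμ (abs_nonneg μ) (by positivity)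
      _ = 1 / ‖φ‖ * ε * (‖ψ‖ * (δ + ‖ψ‖ ^ 2)) := by ring
      _ ≤ 1 / ‖φ‖ * ε * (δ + ‖ψ‖ ^ 3) :=
          mul_le_mul_of_nonneg_left hstep (by positivity)
  have hμη : |μ| * ‖η‖ ≤ ε * (δ + ‖ψ‖ ^ 3) := by
    calc |μ| * ‖η‖ ≤ (ε * (δ + ‖ψ‖ ^ 2)) * ‖ψ‖ :=
          mul_le_mul hμ hηψ (norm_nonneg η) (by positivity)
      _ = ε * (‖ψ‖ * (δ + ‖ψ‖ ^ 2)) := by ring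
      _ ≤ ε * (δ + ‖ψ‖ ^ 3) := mul_le_mul_of_nonneg_left hstep hε
  have hsum : μ ^ 2 + |μ| * ‖η‖ ≤ ε * (1 / ‖φ‖ + 1) * (δ + ‖ψ‖ ^ 3) := by
    have : ε * (1 / ‖φ‖ + 1) * (δ + ‖ψ‖ ^ 3)
        = 1 / ‖φ‖ * ε * (δ + ‖ψ‖ ^ 3) + ε * (δ + ‖ψ‖ ^ 3) := by ring
    linarith
  have hD0 : (0:ℝ) ≤ δ + ‖ψ‖ ^ 3 := by positivity
  have hCsum : C * (μ ^ 2 + |μ| * ‖η‖) ≤ (C * ε * (1 / ‖φ‖ + 1) + 1) * (δ + ‖ψ‖ ^ 3) := by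
    have h := mul_le_mul_of_nonneg_left hsum hC0
    have heq : (C * ε * (1 / ‖φ‖ + 1) + 1) * (δ + ‖ψ‖ ^ 3)
        = C * (ε * (1 / ‖φ‖ + 1) * (δ + ‖ψ‖ ^ 3)) + (δ + ‖ψ‖ ^ 3) := by ring
    linarith
  have hkey := key μ η ψ h1 h2 hψ
  linarith [mul_nonneg hκ.le (sq_nonneg ‖η‖)]
end
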